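/- Let f be a holomorphic generator on 𝔻 of hyperbolic type with Denjoy–Wolff point a = 1, i.e. f(z) = −(1 − z)²·p(z) with p holomorphic, Re p ≥ 0 on 𝔻, and the angular derivative f'(1) = ∠lim_{z→1} f(z)/(z − 1) a positive real number (then f(0) ≠ 0). Let ζ_1, …, ζ_N be pairwise distinct boundary regular null points of f in ∂𝔻 \ {1} with f'(ζ_n) = ∠lim_{z→ζ_n} f(z)/(z − ζ_n) < 0 real. Then both inequalities hold: Σ_{n=1}^{N} 1/|f'(ζ_n)| ≤ 1/f'(1) and Σ_{n=1}^{N} (1 − Re ζ_n)/|f'(ζ_n)| ≤ −Re(1/f(0)); and equality holds in either of the two inequalities if and only if 1/f(z) = Σ_{n=1}^{N} (1/|f'(ζ_n)|)·(1/(z − 1) − 1/(z − ζ_n)) for all z ∈ 𝔻. -/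

import Mathlib

/-!
The function `g = 1/p` has nonnegative real part on the disc (`p` has no zero there, since a
Carathéodory function vanishing at one point vanishes identically, which would force
`f'(1) = 0`). The angular derivative at `ζₙ` gives the radial limit
`(1 - r) g(r ζₙ) → 2 (1 - Re ζₙ) / |f'(ζₙ)|`, and Julia's lemma, a limit of Harnack's
inequality, then lets one subtract from `g`, one point at a time, the functions
`(1 - z)(1 - ζₙ)/(z - ζₙ) / |f'(ζₙ)|`, whose real parts are multiples of the Poisson kernel at
`ζₙ`, keeping the real part nonnegative. The remainder `Q` satisfies
`Q(r)/(1 - r) → 1/f'(1) - ∑ 1/|f'(ζₙ)|` and `Re Q(0) = -Re (1/f(0)) - ∑ (1 - Re ζₙ)/|f'(ζₙ)|`,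
which gives both inequalities. Equality in either of them forces `Re Q(0) = 0` (by Harnack's
inequality in the first case), so `Q` is an imaginary constant, and the finite limit of
`Q(r)/(1 - r)` makes it `0`: this is the extremal formula for `1/f`.
-/

open Complex Filter Metric Finset

noncomputable section

/-- The Stolz angle at a boundary point `ζ` with opening parameter `M`. -/
def StolzAngle (ζ : ℂ) (M : ℝ) : Set ℂ :=
  {z : ℂ | ‖z‖ < 1 ∧ ‖ζ - z‖ < M * (1 - ‖z‖)}

/-- Angular (nontangential) limit of `h` at `ζ` equals `L`: within every Stolz
angle `S(ζ, M)`, `M > 1`, the function tends to `L`. -/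
def AngularLimit (h : ℂ → ℂ) (ζ : ℂ) (L : ℂ) : Prop :=
  ∀ M : ℝ, 1 < M → Tendsto h (nhdsWithin ζ (StolzAngle ζ M)) (nhds L)

/-- Angular limit of `h` at `ζ` is `∞`: `|h|` tends to `+∞` within every Stolz angle. -/
def AngularLimitInfty (h : ℂ → ℂ) (ζ : ℂ) : Prop :=
  ∀ M : ℝ, 1 < M → Tendsto (fun z => ‖h z‖) (nhdsWithin ζ (StolzAngle ζ M)) atTop

open Set Topology ComplexConjugate

lemma ofReal_mul_mem_ball {ζ : ℂ} (hζ : ‖ζ‖ = 1) {r : ℝ} (hr : r ∈ Ioo (0 : ℝ) 1) :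
    (r : ℂ) * ζ ∈ ball (0 : ℂ) 1 := by
  rw [mem_ball_zero_iff, norm_mul, hζ, mul_one, norm_real, Real.norm_of_nonneg hr.1.le]
  exact hr.2

lemma ofReal_mem_ball {r : ℝ} (hr : r ∈ Ioo (0 : ℝ) 1) : (r : ℂ) ∈ ball (0 : ℂ) 1 := by
  simpa using ofReal_mul_mem_ball norm_one hr

lemma tendsto_ofReal_mul (ζ : ℂ) : Tendsto (fun r : ℝ => (r : ℂ) * ζ) (𝓝[<] 1) (𝓝 ζ) := by
  have : Tendsto (fun r : ℝ => (r : ℂ) * ζ) (𝓝 1) (𝓝 ((1 : ℝ) * ζ)) :=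
    Continuous.tendsto (by fun_prop) _
  simpa using this.mono_left nhdsWithin_le_nhds

lemma tendsto_one_sub_ofReal : Tendsto (fun r : ℝ => 1 - (r : ℂ)) (𝓝[<] 1) (𝓝 0) := by
  have : Tendsto (fun r : ℝ => 1 - (r : ℂ)) (𝓝 1) (𝓝 (1 - ((1 : ℝ) : ℂ))) :=
    Continuous.tendsto (by fun_prop) _
  simpa using this.mono_left nhdsWithin_le_nhds

lemma tendsto_ofReal_mul_stolzAngle {ζ : ℂ} (hζ : ‖ζ‖ = 1) {M : ℝ} (hM : 1 < M) :
    Tendsto (fun r : ℝ => (r : ℂ) * ζ) (𝓝[<] 1) (𝓝[StolzAngle ζ M] ζ) := by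
  refine tendsto_nhdsWithin_iff.2 ⟨?_, ?_⟩
  · exact tendsto_ofReal_mul ζ
  · filter_upwards [Ioo_mem_nhdsLT zero_lt_one] with r hr
    have hrζ := mem_ball_zero_iff.1 (ofReal_mul_mem_ball hζ hr)
    refine ⟨hrζ, ?_⟩
    rw [norm_mul, hζ, mul_one, norm_real, Real.norm_of_nonneg hr.1.le] at hrζ ⊢
    have : ζ - r * ζ = ((1 - r : ℝ) : ℂ) * ζ := by push_cast; ring
    rw [this, norm_mul, hζ, mul_one, norm_real, Real.norm_of_nonneg (by linarith [hr.2])]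
    nlinarith [hr.2]

lemma AngularLimit.tendsto_radial {h : ℂ → ℂ} {ζ L : ℂ} (hL : AngularLimit h ζ L)
    (hζ : ‖ζ‖ = 1) : Tendsto (fun r : ℝ => h (r * ζ)) (𝓝[<] 1) (𝓝 L) :=
  (hL 2 one_lt_two).comp (tendsto_ofReal_mul_stolzAngle hζ one_lt_two)

lemma normSq_lt_one_of_mem_ball {z : ℂ} (hz : z ∈ ball (0 : ℂ) 1) : normSq z < 1 := by
  rw [← Complex.sq_norm]
  exact pow_lt_one₀ (norm_nonneg z) (mem_ball_zero_iff.1 hz) two_ne_zero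

lemma normSq_one_sub_conj_mul_sub_normSq_sub (w z : ℂ) :
    normSq (1 - conj w * z) - normSq (w - z) = (1 - normSq w) * (1 - normSq z) := by
  simp only [normSq_apply, mul_re, mul_im, sub_re, sub_im, one_re, one_im, conj_re, conj_im]
  ring

lemma normSq_one_sub_conj_mul_pos {w z : ℂ} (hw : w ∈ ball (0 : ℂ) 1)
    (hz : z ∈ ball (0 : ℂ) 1) : 0 < normSq (1 - conj w * z) := by
  have := normSq_one_sub_conj_mul_sub_normSq_sub w z
  nlinarith [normSq_nonneg (w - z), normSq_lt_one_of_mem_ball hw, normSq_lt_one_of_mem_ball hz]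

def discMobius (w z : ℂ) : ℂ := (w - z) / (1 - conj w * z)

lemma one_sub_normSq_discMobius {w z : ℂ} (hw : w ∈ ball (0 : ℂ) 1) (hz : z ∈ ball (0 : ℂ) 1) :
    1 - normSq (discMobius w z) = (1 - normSq w) * (1 - normSq z) / normSq (1 - conj w * z) := by
  have hpos := normSq_one_sub_conj_mul_pos hw hz
  rw [discMobius, normSq_div, eq_div_iff hpos.ne', sub_mul, div_mul_cancel₀ _ hpos.ne']
  linarith [normSq_one_sub_conj_mul_sub_normSq_sub w z]

lemma discMobius_mem_ball {w z : ℂ} (hw : w ∈ ball (0 : ℂ) 1) (hz : z ∈ ball (0 : ℂ) 1) :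
    discMobius w z ∈ ball (0 : ℂ) 1 := by
  have h := one_sub_normSq_discMobius hw hz
  have : 0 < 1 - normSq (discMobius w z) := by
    rw [h]
    have := normSq_lt_one_of_mem_ball hw
    have := normSq_lt_one_of_mem_ball hz
    exact div_pos (by nlinarith) (normSq_one_sub_conj_mul_pos hw hz)
  rw [mem_ball_zero_iff, ← sq_lt_one_iff₀ (norm_nonneg _), Complex.sq_norm]
  linarith

lemma differentiableOn_discMobius {w : ℂ} (hw : w ∈ ball (0 : ℂ) 1) :
    DifferentiableOn ℂ (discMobius w) (ball (0 : ℂ) 1) :=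
  ((differentiableOn_const w).sub differentiableOn_id).div
    ((differentiableOn_const 1).sub ((differentiableOn_const _).mul differentiableOn_id))
    fun _ hz => normSq_pos.1 (normSq_one_sub_conj_mul_pos hw hz)

lemma discMobius_zero (w : ℂ) : discMobius w 0 = w := by simp [discMobius]

lemma discMobius_discMobius {w z : ℂ} (hw : w ∈ ball (0 : ℂ) 1) (hz : z ∈ ball (0 : ℂ) 1) :
    discMobius w (discMobius w z) = z := by
  have hz' := normSq_pos.1 (normSq_one_sub_conj_mul_pos hw hz)
  have hw' := normSq_pos.1 (normSq_one_sub_conj_mul_pos hw hw)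
  have hden : 1 - conj w * discMobius w z = (1 - conj w * w) / (1 - conj w * z) := by
    rw [eq_div_iff hz', sub_mul, mul_assoc, discMobius, div_mul_cancel₀ _ hz']
    ring
  have hnum : w - discMobius w z = z * (1 - conj w * w) / (1 - conj w * z) := by
    rw [eq_div_iff hz', sub_mul, discMobius, div_mul_cancel₀ _ hz']
    ring
  rw [discMobius, hden, hnum, div_div_div_cancel_right₀ hz', mul_div_assoc, div_self hw',
    mul_one]

namespace Caratheodory

variable {Q : ℂ → ℂ}

lemma eqOn_of_re_nonneg_of_re_eq_zero {U : Set ℂ} (hU : IsOpen U)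
    (hUc : IsPreconnected U) (hd : DifferentiableOn ℂ Q U) (hre : ∀ z ∈ U, 0 ≤ (Q z).re)
    {w : ℂ} (hw : w ∈ U) (h0 : (Q w).re = 0) : ∀ z ∈ U, Q z = Q w := by
  rcases (hd.analyticOnNhd hU).is_constant_or_isOpen hUc with ⟨c, hc⟩ | hopen
  · intro z hz
    rw [hc z hz, hc w hw]
  · obtain ⟨ε, hε, hball⟩ :=
      Metric.isOpen_iff.1 (hopen U subset_rfl hU) (Q w) (mem_image_of_mem Q hw)
    obtain ⟨y, hy, hQy⟩ : Q w - (ε / 2 : ℝ) ∈ Q '' U := hball (by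
      rw [mem_ball, dist_eq_norm, sub_sub_cancel_left, norm_neg, norm_real, Real.norm_eq_abs,
        abs_of_pos (half_pos hε)]
      exact half_lt_self hε)
    have := hre y hy
    rw [hQy, sub_re, h0, ofReal_re] at this
    linarith

lemma re_mul_normSq_one_sub_cayley {u a : ℂ} (h : u + conj a ≠ 0) :
    u.re * normSq (1 - (u - a) / (u + conj a))
      = a.re * (1 - normSq ((u - a) / (u + conj a))) := by
  have hpos : normSq (u + conj a) ≠ 0 := normSq_eq_zero.not.2 h
  rw [one_sub_div h, normSq_div, normSq_div]
  field_simp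
  simp only [normSq_apply, add_re, add_im, sub_re, sub_im, conj_re, conj_im]
  ring

lemma harnack_zero (hd : DifferentiableOn ℂ Q (ball (0 : ℂ) 1))
    (hre : ∀ z ∈ ball (0 : ℂ) 1, 0 ≤ (Q z).re) {z : ℂ} (hz : z ∈ ball (0 : ℂ) 1) :
    (Q 0).re * (1 - ‖z‖) ≤ (Q z).re * (1 + ‖z‖) := by
  have hz1 : ‖z‖ < 1 := mem_ball_zero_iff.1 hz
  have hQz := hre z hz
  rcases (hre 0 (mem_ball_self one_pos)).eq_or_lt with h0 | h0
  · rw [← h0, zero_mul]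
    positivity
  set a := Q 0
  have hden : ∀ η ∈ ball (0 : ℂ) 1, Q η + conj a ≠ 0 := fun η hη h => by
    have := congrArg re h
    rw [add_re, conj_re, zero_re] at this
    linarith [hre η hη]
  set ω : ℂ → ℂ := fun η => (Q η - a) / (Q η + conj a)
  have hω : ∀ η ∈ ball (0 : ℂ) 1, ω η ∈ closedBall (0 : ℂ) 1 := fun η hη => by
    rw [mem_closedBall_zero_iff, norm_div, div_le_one (norm_pos_iff.2 (hden η hη)),
      ← sq_le_sq₀ (norm_nonneg _) (norm_nonneg _), Complex.sq_norm, Complex.sq_norm]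
    simp only [normSq_apply, add_re, add_im, sub_re, sub_im, conj_re, conj_im]
    nlinarith [hre η hη]
  have hSchwarz : ‖ω z‖ ≤ ‖z‖ :=
    Complex.norm_le_norm_of_mapsTo_ball ((hd.sub_const a).div (hd.add_const _) hden) hω
      (by simp [ω, a]) hz1
  have hid := re_mul_normSq_one_sub_cayley (hden z hz)
  set t := ‖ω z‖
  have h1ω : normSq (1 - ω z) ≤ (1 + t) ^ 2 := by
    rw [← Complex.sq_norm]
    gcongr
    exact (norm_sub_le _ _).trans_eq (by rw [norm_one])
  have hωsq : normSq (ω z) = t ^ 2 := (Complex.sq_norm _).symm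
  have ht : 0 ≤ t := norm_nonneg _
  have key : a.re * (1 - t) ≤ (Q z).re * (1 + t) := by
    rw [hωsq] at hid
    nlinarith [mul_le_mul_of_nonneg_left h1ω hQz]
  nlinarith

lemma harnack (hd : DifferentiableOn ℂ Q (ball (0 : ℂ) 1))
    (hre : ∀ z ∈ ball (0 : ℂ) 1, 0 ≤ (Q z).re) {w z : ℂ} (hw : w ∈ ball (0 : ℂ) 1)
    (hz : z ∈ ball (0 : ℂ) 1) :
    (Q w).re * ((1 - normSq w) * (1 - normSq z)) ≤ 4 * (Q z).re * normSq (1 - conj w * z) := by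
  have hmaps : MapsTo (discMobius w) (ball (0 : ℂ) 1) (ball (0 : ℂ) 1) :=
    fun η hη => discMobius_mem_ball hw hη
  have hcenter := harnack_zero (hd.comp (differentiableOn_discMobius hw) hmaps)
    (fun η hη => hre _ (hmaps hη)) (hmaps hz)
  simp only [Function.comp_apply, discMobius_zero, discMobius_discMobius hw hz] at hcenter
  set s := ‖discMobius w z‖
  have hs : 1 - s ^ 2 = (1 - normSq w) * (1 - normSq z) / normSq (1 - conj w * z) := by
    rw [← one_sub_normSq_discMobius hw hz, ← Complex.sq_norm]
  have hpos := normSq_one_sub_conj_mul_pos hw hz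
  have hs1 : s < 1 := mem_ball_zero_iff.1 (hmaps hz)
  have hs0 : 0 ≤ s := norm_nonneg _
  have hQz := hre z hz
  have hQw := hre w hw
  rw [eq_div_iff hpos.ne'] at hs
  rw [← hs]
  have : (Q w).re * (1 - s ^ 2) ≤ 4 * (Q z).re :=
    calc (Q w).re * (1 - s ^ 2) = (Q w).re * (1 - s) * (1 + s) := by ring
      _ ≤ (Q z).re * (1 + s) * (1 + s) := by gcongr
      _ ≤ (Q z).re * 2 * 2 := by gcongr <;> linarith
      _ = 4 * (Q z).re := by ring
  rw [← mul_assoc]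
  exact mul_le_mul_of_nonneg_right this hpos.le

lemma julia (hd : DifferentiableOn ℂ Q (ball (0 : ℂ) 1))
    (hre : ∀ z ∈ ball (0 : ℂ) 1, 0 ≤ (Q z).re) {ζ w : ℂ} (hζ : ‖ζ‖ = 1)
    (hlim : Tendsto (fun r : ℝ => (1 - (r : ℂ)) * Q (r * ζ)) (𝓝[<] 1) (𝓝 w))
    {z : ℂ} (hz : z ∈ ball (0 : ℂ) 1) :
    w.re * (1 - normSq z) ≤ 2 * (Q z).re * normSq (ζ - z) := by
  have hζ2 : normSq ζ = 1 := by rw [← Complex.sq_norm, hζ, one_pow]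
  have hharnack : ∀ r ∈ Ioo (0 : ℝ) 1,
      ((1 - (r : ℂ)) * Q (r * ζ)).re * ((1 + r) * (1 - normSq z))
        ≤ 4 * (Q z).re * normSq (1 - conj ((r : ℂ) * ζ) * z) := fun r hr => by
    have h := harnack hd hre (ofReal_mul_mem_ball hζ hr) hz
    rw [normSq_mul, normSq_ofReal, hζ2] at h
    rw [show 1 - (r : ℂ) = ((1 - r : ℝ) : ℂ) by push_cast; ring, re_ofReal_mul]
    linarith
  have hlhs : Tendsto (fun r : ℝ => ((1 - (r : ℂ)) * Q (r * ζ)).re * ((1 + r) * (1 - normSq z)))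
      (𝓝[<] 1) (𝓝 (w.re * ((1 + 1) * (1 - normSq z)))) :=
    (continuous_re.continuousAt.tendsto.comp hlim).mul
      ((((continuous_const.add continuous_id).mul continuous_const).tendsto 1).mono_left
        nhdsWithin_le_nhds)
  have hrhs : Tendsto (fun r : ℝ => 4 * (Q z).re * normSq (1 - conj ((r : ℂ) * ζ) * z))
      (𝓝[<] 1) (𝓝 (4 * (Q z).re * normSq (1 - conj ((1 : ℝ) * ζ) * z))) :=
    (Continuous.tendsto (by fun_prop) 1).mono_left nhdsWithin_le_nhds
  have hle := le_of_tendsto_of_tendsto hlhs hrhs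
    (by filter_upwards [Ioo_mem_nhdsLT zero_lt_one] with r hr using hharnack r hr)
  have hsym : normSq (1 - conj ζ * z) = normSq (ζ - z) := by
    have := normSq_one_sub_conj_mul_sub_normSq_sub ζ z
    rw [hζ2, sub_self, zero_mul] at this
    linarith
  rw [ofReal_one, one_mul, hsym] at hle
  linarith

def poleTerm (ζ z : ℂ) : ℂ := (1 - z) * (1 - ζ) / (z - ζ)

lemma poleTerm_eq {ζ z : ℂ} (hz1 : z ≠ 1) (hzζ : z ≠ ζ) :
    poleTerm ζ z = -(1 - z) ^ 2 * (1 / (z - 1) - 1 / (z - ζ)) := by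
  have h1 : z - 1 ≠ 0 := sub_ne_zero.2 hz1
  have h2 : z - ζ ≠ 0 := sub_ne_zero.2 hzζ
  rw [poleTerm]
  field_simp
  ring

lemma re_poleTerm_mul_normSq {ζ z : ℂ} (hζ : ‖ζ‖ = 1) (hzζ : z ≠ ζ) :
    (poleTerm ζ z).re * normSq (z - ζ) = (1 - ζ.re) * (1 - normSq z) := by
  have hζ2 : ζ.re ^ 2 + ζ.im ^ 2 = 1 := by
    rw [← sq_eq_sq₀ (norm_nonneg _) zero_le_one, Complex.sq_norm, normSq_apply] at hζ
    linear_combination hζ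
  rw [poleTerm, ← re_mul_ofReal, ← mul_conj, div_mul_eq_mul_div, mul_div_assoc,
    mul_div_cancel_left₀ _ (sub_ne_zero.2 hzζ)]
  simp only [normSq_apply, mul_re, mul_im, sub_re, sub_im, one_re, one_im, conj_re, conj_im]
  linear_combination (1 - z.re) * hζ2

lemma re_poleTerm_zero {ζ : ℂ} (hζ : ‖ζ‖ = 1) : (poleTerm ζ 0).re = 1 - ζ.re := by
  have h := re_poleTerm_mul_normSq hζ (z := 0) (by rintro rfl; simp at hζ)
  rwa [zero_sub, normSq_neg, ← Complex.sq_norm, hζ, map_zero, one_pow, mul_one, sub_zero,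
    mul_one] at h

lemma differentiableOn_poleTerm {ζ : ℂ} (hζ : ‖ζ‖ = 1) :
    DifferentiableOn ℂ (poleTerm ζ) (ball (0 : ℂ) 1) :=
  (((differentiableOn_const 1).sub differentiableOn_id).mul (differentiableOn_const _)).div
    (differentiableOn_id.sub (differentiableOn_const ζ)) fun z hz => sub_ne_zero.2 fun h => by
      rw [mem_ball_zero_iff, h, hζ] at hz
      exact lt_irrefl 1 hz

lemma tendsto_poleTerm_div_one_sub {ζ : ℂ} (hζ1 : ζ ≠ 1) :
    Tendsto (fun r : ℝ => poleTerm ζ r / (1 - r)) (𝓝[<] 1) (𝓝 1) := by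
  have h1ζ : 1 - ζ ≠ 0 := sub_ne_zero.2 hζ1.symm
  have hlim : Tendsto (fun r : ℝ => (1 - ζ) / ((r : ℂ) - ζ)) (𝓝[<] 1) (𝓝 ((1 - ζ) / (1 - ζ))) :=
    tendsto_const_nhds.div ((tendsto_ofReal_mul 1).sub_const ζ |>.congr fun r => by simp)
      h1ζ
  rw [div_self h1ζ] at hlim
  refine hlim.congr' ?_
  filter_upwards [Ioo_mem_nhdsLT zero_lt_one] with r hr
  have : 1 - (r : ℂ) ≠ 0 := sub_ne_zero.2 (by exact_mod_cast hr.2.ne')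
  rw [poleTerm]
  field_simp

lemma tendsto_one_sub_mul_poleTerm {ζ ζ' : ℂ} (hζ : ζ ≠ ζ') :
    Tendsto (fun r : ℝ => (1 - (r : ℂ)) * poleTerm ζ' (r * ζ)) (𝓝[<] 1) (𝓝 0) := by
  have hcont : ContinuousAt (poleTerm ζ') ζ :=
    ((continuous_const.sub continuous_id).mul continuous_const).continuousAt.div
      (continuous_id.sub continuous_const).continuousAt (sub_ne_zero.2 hζ)
  simpa using tendsto_one_sub_ofReal.mul (hcont.tendsto.comp (tendsto_ofReal_mul ζ))

lemma differentiableOn_sub_sum_poleTerm {ι : Type*} {g : ℂ → ℂ}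
    (hd : DifferentiableOn ℂ g (ball (0 : ℂ) 1)) {ζ : ι → ℂ} (hζ : ∀ n, ‖ζ n‖ = 1) (c : ι → ℂ)
    (S : Finset ι) :
    DifferentiableOn ℂ (fun z => g z - ∑ n ∈ S, c n * poleTerm (ζ n) z) (ball (0 : ℂ) 1) :=
  hd.sub (DifferentiableOn.fun_sum fun n _ =>
    (differentiableOn_const _).mul (differentiableOn_poleTerm (hζ n)))

lemma re_sub_mul_poleTerm_nonneg (hd : DifferentiableOn ℂ Q (ball (0 : ℂ) 1))
    (hre : ∀ z ∈ ball (0 : ℂ) 1, 0 ≤ (Q z).re) {ζ : ℂ} (hζ : ‖ζ‖ = 1) {c : ℝ}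
    (hlim : Tendsto (fun r : ℝ => (1 - (r : ℂ)) * Q (r * ζ)) (𝓝[<] 1)
      (𝓝 ((2 * (1 - ζ.re) * c : ℝ) : ℂ)))
    {z : ℂ} (hz : z ∈ ball (0 : ℂ) 1) : 0 ≤ (Q z - c * poleTerm ζ z).re := by
  have hzζ : z ≠ ζ := by
    rintro rfl
    rw [mem_ball_zero_iff, hζ] at hz
    exact lt_irrefl 1 hz
  have hjulia := julia hd hre hζ hlim hz
  rw [ofReal_re, ← normSq_neg (ζ - z), neg_sub] at hjulia
  have hpole := re_poleTerm_mul_normSq hζ hzζ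
  have hpos : 0 < normSq (z - ζ) := normSq_pos.2 (sub_ne_zero.2 hzζ)
  have : c * (poleTerm ζ z).re * normSq (z - ζ) ≤ (Q z).re * normSq (z - ζ) := by
    rw [mul_assoc, hpole]
    linarith
  rw [sub_re, re_ofReal_mul, sub_nonneg]
  exact le_of_mul_le_mul_right this hpos

lemma re_sub_sum_poleTerm_nonneg {ι : Type*} {g : ℂ → ℂ}
    (hd : DifferentiableOn ℂ g (ball (0 : ℂ) 1)) (hre : ∀ z ∈ ball (0 : ℂ) 1, 0 ≤ (g z).re)
    {ζ : ι → ℂ} (hinj : Function.Injective ζ) (hζ : ∀ n, ‖ζ n‖ = 1) {c : ι → ℝ}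
    (hlim : ∀ n, Tendsto (fun r : ℝ => (1 - (r : ℂ)) * g (r * ζ n)) (𝓝[<] 1)
      (𝓝 ((2 * (1 - (ζ n).re) * c n : ℝ) : ℂ)))
    (S : Finset ι) : ∀ z ∈ ball (0 : ℂ) 1, 0 ≤ (g z - ∑ n ∈ S, c n * poleTerm (ζ n) z).re := by
  classical
  induction S using Finset.induction_on with
  | empty => simpa using hre
  | @insert a S haS ih =>
    have hlimS : Tendsto
        (fun r : ℝ => (1 - (r : ℂ)) * (g (r * ζ a) - ∑ n ∈ S, c n * poleTerm (ζ n) (r * ζ a)))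
        (𝓝[<] 1) (𝓝 ((2 * (1 - (ζ a).re) * c a : ℝ) : ℂ)) := by
      have hsum := tendsto_finsetSum S fun n hn =>
        (tendsto_one_sub_mul_poleTerm (hinj.ne (ne_of_mem_of_not_mem hn haS).symm)).const_mul
          (c n : ℂ)
      simp only [mul_zero, Finset.sum_const_zero] at hsum
      rw [← sub_zero ((_ : ℝ) : ℂ)]
      refine ((hlim a).sub hsum).congr fun r => ?_
      simp only [mul_sub, Finset.mul_sum, mul_left_comm]
    intro z hz
    have h := re_sub_mul_poleTerm_nonneg (differentiableOn_sub_sum_poleTerm hd hζ _ S) ih (hζ a)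
      hlimS hz
    rwa [Finset.sum_insert haS, ← sub_sub, sub_right_comm]

lemma re_sub_sum_poleTerm_zero {ι : Type*} (g : ℂ → ℂ) {ζ : ι → ℂ} (hζ : ∀ n, ‖ζ n‖ = 1)
    (c : ι → ℝ) (S : Finset ι) :
    (g 0 - ∑ n ∈ S, (c n : ℂ) * poleTerm (ζ n) 0).re
      = (g 0).re - ∑ n ∈ S, c n * (1 - (ζ n).re) := by
  simp only [sub_re, re_sum, re_ofReal_mul, re_poleTerm_zero (hζ _)]

lemma tendsto_sub_sum_poleTerm_div_one_sub {ι : Type*} {g : ℂ → ℂ} {L : ℂ}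
    (hg : Tendsto (fun r : ℝ => g r / (1 - r)) (𝓝[<] 1) (𝓝 L)) {ζ : ι → ℂ} (hζ1 : ∀ n, ζ n ≠ 1)
    (c : ι → ℂ) (S : Finset ι) :
    Tendsto (fun r : ℝ => (g r - ∑ n ∈ S, c n * poleTerm (ζ n) r) / (1 - r)) (𝓝[<] 1)
      (𝓝 (L - ∑ n ∈ S, c n)) := by
  have hsum := tendsto_finsetSum S fun n _ =>
    (tendsto_poleTerm_div_one_sub (hζ1 n)).const_mul (c n)
  simp only [mul_one] at hsum
  refine (hg.sub hsum).congr fun r => ?_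
  simp only [sub_div, Finset.sum_div, mul_div_assoc]

lemma re_div_one_sub_ofReal (w : ℂ) (r : ℝ) : (w / (1 - r)).re = w.re / (1 - r) := by
  rw [← ofReal_one, ← ofReal_sub, div_ofReal_re]

lemma re_nonneg_of_tendsto_div_one_sub {ℓ : ℂ}
    (hlim : Tendsto (fun r : ℝ => Q r / (1 - r)) (𝓝[<] 1) (𝓝 ℓ))
    (hre : ∀ z ∈ ball (0 : ℂ) 1, 0 ≤ (Q z).re) :
    0 ≤ ℓ.re :=
  ge_of_tendsto (continuous_re.continuousAt.tendsto.comp hlim) <| by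
    filter_upwards [Ioo_mem_nhdsLT zero_lt_one] with r hr
    rw [Function.comp_apply, re_div_one_sub_ofReal]
    exact div_nonneg (hre _ (ofReal_mem_ball hr)) (by linarith [hr.2])

lemma re_eq_zero_of_tendsto_div_one_sub {ℓ : ℂ}
    (hlim : Tendsto (fun r : ℝ => Q r / (1 - r)) (𝓝[<] 1) (𝓝 ℓ))
    (hd : DifferentiableOn ℂ Q (ball (0 : ℂ) 1))
    (hre : ∀ z ∈ ball (0 : ℂ) 1, 0 ≤ (Q z).re) (hℓ : ℓ.re = 0) : (Q 0).re = 0 := by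
  have hupper : Tendsto (fun r : ℝ => (Q r / (1 - r)).re * (1 + r)) (𝓝[<] 1)
      (𝓝 (ℓ.re * (1 + 1))) :=
    (continuous_re.continuousAt.tendsto.comp hlim).mul
      ((tendsto_const_nhds.add tendsto_id).mono_left nhdsWithin_le_nhds)
  have hbound : (Q 0).re ≤ ℓ.re * (1 + 1) :=
    le_of_tendsto_of_tendsto tendsto_const_nhds hupper <| by
      filter_upwards [Ioo_mem_nhdsLT zero_lt_one] with r hr
      have h := harnack_zero hd hre (ofReal_mem_ball hr)
      rw [norm_real, Real.norm_of_nonneg hr.1.le] at h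
      rw [re_div_one_sub_ofReal, div_mul_eq_mul_div, le_div_iff₀ (by linarith [hr.2])]
      linarith
  linarith [hre 0 (mem_ball_self one_pos)]

lemma eqOn_zero_of_re_eq_zero {ℓ : ℂ}
    (hlim : Tendsto (fun r : ℝ => Q r / (1 - r)) (𝓝[<] 1) (𝓝 ℓ))
    (hd : DifferentiableOn ℂ Q (ball (0 : ℂ) 1))
    (hre : ∀ z ∈ ball (0 : ℂ) 1, 0 ≤ (Q z).re) (h0 : (Q 0).re = 0) :
    ∀ z ∈ ball (0 : ℂ) 1, Q z = 0 := by
  have hconst := eqOn_of_re_nonneg_of_re_eq_zero isOpen_ball (convex_ball 0 1).isPreconnected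
    hd hre (mem_ball_self one_pos) h0
  have hQ0 : Tendsto (fun r : ℝ => Q r) (𝓝[<] 1) (𝓝 0) := by
    refine (zero_mul ℓ ▸ tendsto_one_sub_ofReal.mul hlim).congr' ?_
    filter_upwards [Ioo_mem_nhdsLT zero_lt_one] with r hr
    exact mul_div_cancel₀ _ (sub_ne_zero.2 (by exact_mod_cast hr.2.ne'))
  have : Q 0 = 0 := by
    refine tendsto_nhds_unique (tendsto_const_nhds.congr' ?_) hQ0
    filter_upwards [Ioo_mem_nhdsLT zero_lt_one] with r hr
    exact (hconst _ (ofReal_mem_ball hr)).symm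
  intro z hz
  rw [hconst z hz, this]

lemma eq_zero_of_eqOn_zero {ℓ : ℂ}
    (hlim : Tendsto (fun r : ℝ => Q r / (1 - r)) (𝓝[<] 1) (𝓝 ℓ))
    (h : ∀ z ∈ ball (0 : ℂ) 1, Q z = 0) : ℓ = 0 := by
  refine tendsto_nhds_unique hlim (tendsto_const_nhds.congr' ?_)
  filter_upwards [Ioo_mem_nhdsLT zero_lt_one] with r hr
  rw [h _ (ofReal_mem_ball hr), zero_div]

lemma eqOn_zero_iff_re_limit_eq_zero {ℓ : ℂ}
    (hlim : Tendsto (fun r : ℝ => Q r / (1 - r)) (𝓝[<] 1) (𝓝 ℓ))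
    (hd : DifferentiableOn ℂ Q (ball (0 : ℂ) 1)) (hre : ∀ z ∈ ball (0 : ℂ) 1, 0 ≤ (Q z).re) :
    (∀ z ∈ ball (0 : ℂ) 1, Q z = 0) ↔ ℓ.re = 0 :=
  ⟨fun h => by rw [eq_zero_of_eqOn_zero hlim h, zero_re], fun h =>
    eqOn_zero_of_re_eq_zero hlim hd hre (re_eq_zero_of_tendsto_div_one_sub hlim hd hre h)⟩

lemma eqOn_zero_iff_re_eq_zero {ℓ : ℂ}
    (hlim : Tendsto (fun r : ℝ => Q r / (1 - r)) (𝓝[<] 1) (𝓝 ℓ))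
    (hd : DifferentiableOn ℂ Q (ball (0 : ℂ) 1)) (hre : ∀ z ∈ ball (0 : ℂ) 1, 0 ≤ (Q z).re) :
    (∀ z ∈ ball (0 : ℂ) 1, Q z = 0) ↔ (Q 0).re = 0 :=
  ⟨fun h => by rw [h 0 (mem_ball_self one_pos), zero_re], eqOn_zero_of_re_eq_zero hlim hd hre⟩

end Caratheodory

open Caratheodory

section Generator

variable {p f : ℂ → ℂ}

lemma inv_eq_neg_sq_div (hf : ∀ z, f z = -(1 - z) ^ 2 * p z) {z : ℂ} (hz : z ≠ 1) :
    (p z)⁻¹ = -(1 - z) ^ 2 / f z := by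
  rw [hf, div_mul_cancel_left₀ (neg_ne_zero.2 (pow_ne_zero 2 (sub_ne_zero.2 hz.symm)))]

lemma ne_zero_of_angularLimit (hp : DifferentiableOn ℂ p (ball (0 : ℂ) 1))
    (hre : ∀ z ∈ ball (0 : ℂ) 1, 0 ≤ (p z).re) (hf : ∀ z, f z = -(1 - z) ^ 2 * p z) {L : ℂ}
    (hL : L ≠ 0) (hder : AngularLimit (fun z => f z / (z - 1)) 1 L) :
    ∀ z ∈ ball (0 : ℂ) 1, p z ≠ 0 := by
  intro z₀ hz₀ hp0
  have hconst := eqOn_of_re_nonneg_of_re_eq_zero isOpen_ball (convex_ball 0 1).isPreconnected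
    hp hre hz₀ (by rw [hp0, zero_re])
  refine hL (tendsto_nhds_unique (hder.tendsto_radial norm_one) (tendsto_const_nhds.congr' ?_))
  filter_upwards [Ioo_mem_nhdsLT zero_lt_one] with r hr
  rw [mul_one, hf, hconst _ (ofReal_mem_ball hr), hp0, mul_zero, zero_div]

lemma tendsto_inv_div_one_sub_of_angularLimit (hf : ∀ z, f z = -(1 - z) ^ 2 * p z) {L : ℂ}
    (hL : L ≠ 0) (hder : AngularLimit (fun z => f z / (z - 1)) 1 L) :
    Tendsto (fun r : ℝ => (p r)⁻¹ / (1 - r)) (𝓝[<] 1) (𝓝 L⁻¹) := by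
  refine ((hder.tendsto_radial norm_one).inv₀ hL).congr' ?_
  filter_upwards [Ioo_mem_nhdsLT zero_lt_one] with r hr
  have h1r : 1 - (r : ℂ) ≠ 0 := sub_ne_zero.2 (by exact_mod_cast hr.2.ne')
  rw [mul_one, inv_eq_neg_sq_div hf (sub_ne_zero.1 h1r).symm, inv_div]
  field_simp
  ring

lemma tendsto_one_sub_mul_inv_of_angularLimit (hf : ∀ z, f z = -(1 - z) ^ 2 * p z) {ζ : ℂ}
    (hζ : ‖ζ‖ = 1) {m : ℝ} (hm : m < 0)
    (hder : AngularLimit (fun z => f z / (z - ζ)) ζ (m : ℂ)) :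
    Tendsto (fun r : ℝ => (1 - (r : ℂ)) * (p (r * ζ))⁻¹) (𝓝[<] 1)
      (𝓝 ((2 * (1 - ζ.re) * (1 / |m|) : ℝ) : ℂ)) := by
  have hζζ : conj ζ * ζ = 1 := by
    rw [conj_mul', hζ, ofReal_one, one_pow]
  have hlim : Tendsto (fun r : ℝ => conj ζ * (1 - r * ζ) ^ 2 / (f (r * ζ) / (r * ζ - ζ)))
      (𝓝[<] 1) (𝓝 (conj ζ * (1 - ζ) ^ 2 / m)) :=
    (tendsto_const_nhds.mul (((tendsto_ofReal_mul ζ).const_sub 1).pow 2)).div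
      (hder.tendsto_radial hζ) (ofReal_ne_zero.2 hm.ne)
  -- on the unit circle `1 - r = conj ζ * (ζ - r ζ)` and `conj ζ * (1 - ζ) ^ 2 = 2 Re ζ - 2`
  have hval : conj ζ * (1 - ζ) ^ 2 / m = ((2 * (1 - ζ.re) * (1 / |m|) : ℝ) : ℂ) := by
    have hreζ : ((ζ.re : ℝ) : ℂ) = (ζ + conj ζ) / 2 := by rw [add_conj]; push_cast; ring
    have hm0 : (m : ℂ) ≠ 0 := ofReal_ne_zero.2 hm.ne
    rw [abs_of_neg hm]
    push_cast
    rw [hreζ]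
    field_simp
    linear_combination (ζ - 2) * hζζ
  rw [← hval]
  refine hlim.congr' ?_
  filter_upwards [Ioo_mem_nhdsLT zero_lt_one] with r hr
  have hrζ : (r : ℂ) * ζ ≠ 1 := ne_of_mem_of_not_mem (ofReal_mul_mem_ball hζ hr) (by simp)
  rw [inv_eq_neg_sq_div hf hrζ, div_div_eq_mul_div, ← mul_div_assoc]
  congr 1
  linear_combination (1 - (r : ℂ) * ζ) ^ 2 * (r - 1) * hζζ

lemma inv_sub_sum_poleTerm_eq_zero_iff {ι : Type*} (hf : ∀ z, f z = -(1 - z) ^ 2 * p z)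
    {ζ : ι → ℂ} (hζ : ∀ n, ‖ζ n‖ = 1) (c : ι → ℂ) (S : Finset ι) {z : ℂ}
    (hz : z ∈ ball (0 : ℂ) 1) :
    (p z)⁻¹ - ∑ n ∈ S, c n * poleTerm (ζ n) z = 0 ↔
      1 / f z = ∑ n ∈ S, c n * (1 / (z - 1) - 1 / (z - ζ n)) := by
  have hz1 : z ≠ 1 := ne_of_mem_of_not_mem hz (by simp)
  have hzζ : ∀ n, z ≠ ζ n := fun n => ne_of_mem_of_not_mem hz (by simp [hζ n])
  have hfactor : (p z)⁻¹ - ∑ n ∈ S, c n * poleTerm (ζ n) z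
      = -(1 - z) ^ 2 * (1 / f z - ∑ n ∈ S, c n * (1 / (z - 1) - 1 / (z - ζ n))) := by
    rw [inv_eq_neg_sq_div hf hz1, div_eq_mul_one_div, mul_sub, Finset.mul_sum]
    congr 1
    exact Finset.sum_congr rfl fun n _ => by rw [poleTerm_eq hz1 (hzζ n)]; ring
  rw [hfactor, mul_eq_zero, sub_eq_zero,
    or_iff_right (neg_ne_zero.2 (pow_ne_zero 2 (sub_ne_zero.2 hz1.symm)))]

end Generator

/-- unified hyperbolic form: both inequalities hold and equality
in either one characterizes the same extremal generator. -/
theorem stmt19 (N : ℕ) (p f : ℂ → ℂ)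
    (hp : DifferentiableOn ℂ p (ball (0:ℂ) 1))
    (hre : ∀ z ∈ ball (0:ℂ) 1, 0 ≤ (p z).re)
    (hf : ∀ z, f z = -(1 - z)^2 * p z)
    (m₀ : ℝ) (hm₀ : 0 < m₀)
    (hder1 : AngularLimit (fun z => f z / (z - 1)) 1 (m₀ : ℂ))
    (ζ : Fin N → ℂ) (hinj : Function.Injective ζ)
    (hζ : ∀ n, ‖ζ n‖ = 1) (hζ1 : ∀ n, ζ n ≠ 1)
    (m : Fin N → ℝ) (hm : ∀ n, m n < 0)
    (hder : ∀ n, AngularLimit (fun z => f z / (z - ζ n)) (ζ n) ((m n : ℝ) : ℂ)) :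
    (∑ n, 1 / |m n|) ≤ 1 / m₀ ∧
    (∑ n, (1 - (ζ n).re) / |m n|) ≤ -(1 / f 0).re ∧
    (((∑ n, 1 / |m n|) = 1 / m₀ ↔
        ∀ z ∈ ball (0:ℂ) 1,
          1 / f z = ∑ n, (1 / ((|m n| : ℝ) : ℂ)) * (1 / (z - 1) - 1 / (z - ζ n))) ∧
      ((∑ n, (1 - (ζ n).re) / |m n|) = -(1 / f 0).re ↔
        ∀ z ∈ ball (0:ℂ) 1,
          1 / f z = ∑ n, (1 / ((|m n| : ℝ) : ℂ)) * (1 / (z - 1) - 1 / (z - ζ n)))) := by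
  have hm₀' : (m₀ : ℂ) ≠ 0 := ofReal_ne_zero.2 hm₀.ne'
  have hpne := ne_zero_of_angularLimit hp hre hf hm₀' hder1
  have hgd : DifferentiableOn ℂ (fun z => (p z)⁻¹) (ball 0 1) := hp.inv hpne
  set Q : ℂ → ℂ := fun z => (p z)⁻¹ - ∑ n, ((1 / |m n| : ℝ) : ℂ) * poleTerm (ζ n) z
  have hQd : DifferentiableOn ℂ Q (ball 0 1) := differentiableOn_sub_sum_poleTerm hgd hζ _ univ
  have hQre : ∀ z ∈ ball (0 : ℂ) 1, 0 ≤ (Q z).re :=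
    re_sub_sum_poleTerm_nonneg hgd
      (fun z hz => by rw [inv_re]; exact div_nonneg (hre z hz) (normSq_nonneg _)) hinj hζ
      (fun n => tendsto_one_sub_mul_inv_of_angularLimit hf (hζ n) (hm n) (hder n)) univ
  have hlim : Tendsto (fun r : ℝ => Q r / (1 - r)) (𝓝[<] 1)
      (𝓝 ((m₀ : ℂ)⁻¹ - ∑ n, ((1 / |m n| : ℝ) : ℂ))) :=
    tendsto_sub_sum_poleTerm_div_one_sub (g := fun z => (p z)⁻¹)
      (tendsto_inv_div_one_sub_of_angularLimit hf hm₀' hder1) hζ1 _ univ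
  have hℓ : ((m₀ : ℂ)⁻¹ - ∑ n, ((1 / |m n| : ℝ) : ℂ)).re = 1 / m₀ - ∑ n, 1 / |m n| := by
    simp only [sub_re, re_sum, ← ofReal_inv, ofReal_re, one_div]
  have hQ0 : (Q 0).re = -(1 / f 0).re - ∑ n, (1 - (ζ n).re) / |m n| := by
    rw [re_sub_sum_poleTerm_zero (fun z => (p z)⁻¹) hζ, inv_eq_neg_sq_div hf zero_ne_one]
    simp only [sub_zero, one_pow, neg_div, neg_re, one_div_mul_eq_div]
  have hext : (∀ z ∈ ball (0 : ℂ) 1, Q z = 0) ↔ ∀ z ∈ ball (0:ℂ) 1,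
      1 / f z = ∑ n, (1 / ((|m n| : ℝ) : ℂ)) * (1 / (z - 1) - 1 / (z - ζ n)) :=
    forall₂_congr fun z hz => (inv_sub_sum_poleTerm_eq_zero_iff hf hζ _ univ hz).trans <| by
      simp only [ofReal_div, ofReal_one]
  refine ⟨?_, ?_, ?_, ?_⟩
  · linarith [re_nonneg_of_tendsto_div_one_sub hlim hQre]
  · linarith [hQre 0 (mem_ball_self one_pos)]
  · rw [← hext, eqOn_zero_iff_re_limit_eq_zero hlim hQd hQre, hℓ, sub_eq_zero, eq_comm]
  · rw [← hext, eqOn_zero_iff_re_eq_zero hlim hQd hQre, hQ0, sub_eq_zero, eq_comm]
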